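/- Let γ > 1, d ≥ 1, and s⁰ ∈ ℝ. Let U_k = (ρ_k, m_k, E_k) ∈ ℝ × ℝ^d × ℝ, k = 1, …, K, be states with ρ_k > 0 that each satisfy the entropy bound p(U_k) ≥ exp(s⁰) ρ_k^γ, where p(U) = (γ−1)(E − |m|²/(2ρ)). Then for any convex combination U = Σ_k α_k U_k (α_k ≥ 0, Σ_k α_k = 1), the combined state has positive density ρ(U) = Σ_k α_k ρ_k > 0 and satisfies p(U) ≥ exp(s⁰) ρ(U)^γ; equivalently, the physical entropy s(U) = ln p(U) − γ ln ρ(U) satisfies s(U) ≥ s⁰ (quasi-concavity of the entropy: convex combinations preserve a common entropy lower bound). -/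

import Mathlib

/-- The ideal-gas pressure `p(ρ, m, E) = (γ − 1)(E − |m|²/(2ρ))` of a
conservative Euler state `(ρ, m, E) ∈ ℝ × ℝ^d × ℝ`. -/
noncomputable def eulerPressure (γ : ℝ) {d : ℕ}
    (ρ : ℝ) (m : EuclideanSpace ℝ (Fin d)) (E : ℝ) : ℝ :=
  (γ - 1) * (E - ‖m‖ ^ 2 / (2 * ρ))

/-!
The pressure is concave and positively homogeneous of degree one in `(ρ, m, E)`, because the
kinetic energy `|m|²/(2ρ)` is the perspective of the convex function `|m|²/2`; hence the
pressure of a convex combination dominates the combination of the pressures. Jensen's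
inequality for the convex map `ρ ↦ ρ^γ` then carries the bound `p ≥ exp(s⁰) ρ^γ` over.
-/

open Finset Real

theorem norm_sum_smul_sq_div_sum_le {ι F : Type*} [SeminormedAddCommGroup F] [NormedSpace ℝ F]
    (s : Finset ι) {α ρ : ι → ℝ} (m : ι → F)
    (hα : ∀ i ∈ s, 0 ≤ α i) (hρ : ∀ i ∈ s, 0 < ρ i) :
    ‖∑ i ∈ s, α i • m i‖ ^ 2 / ∑ i ∈ s, α i * ρ i ≤ ∑ i ∈ s, α i * (‖m i‖ ^ 2 / ρ i) := by
  have hweight : ∀ i ∈ s, 0 ≤ α i * ρ i := fun i hi => mul_nonneg (hα i hi) (hρ i hi).le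
  have hkin : ∀ i ∈ s, 0 ≤ α i * (‖m i‖ ^ 2 / ρ i) := fun i hi =>
    mul_nonneg (hα i hi) (div_nonneg (sq_nonneg _) (hρ i hi).le)
  have hcauchy : (∑ i ∈ s, α i * ‖m i‖) ^ 2 ≤
      (∑ i ∈ s, α i * ρ i) * ∑ i ∈ s, α i * (‖m i‖ ^ 2 / ρ i) :=
    sum_sq_le_sum_mul_sum_of_sq_le_mul s hweight hkin fun i hi =>
      le_of_eq (by field_simp [(hρ i hi).ne'])
  have htriangle : ‖∑ i ∈ s, α i • m i‖ ≤ ∑ i ∈ s, α i * ‖m i‖ :=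
    norm_sum_le_of_le s fun i hi => (norm_smul_of_nonneg (hα i hi) (m i)).le
  refine div_le_of_le_mul₀ (sum_nonneg hweight) (sum_nonneg hkin) ?_
  calc ‖∑ i ∈ s, α i • m i‖ ^ 2 ≤ (∑ i ∈ s, α i * ‖m i‖) ^ 2 := by gcongr
    _ ≤ _ := by rw [mul_comm]; exact hcauchy

theorem sum_mul_eulerPressure_le {ι : Type*} {γ : ℝ} (hγ : 1 ≤ γ) {d : ℕ} (s : Finset ι)
    {α ρ : ι → ℝ} (m : ι → EuclideanSpace ℝ (Fin d)) (E : ι → ℝ)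
    (hα : ∀ i ∈ s, 0 ≤ α i) (hρ : ∀ i ∈ s, 0 < ρ i) :
    ∑ i ∈ s, α i * eulerPressure γ (ρ i) (m i) (E i) ≤
      eulerPressure γ (∑ i ∈ s, α i * ρ i) (∑ i ∈ s, α i • m i) (∑ i ∈ s, α i * E i) := by
  have hkin : ‖∑ i ∈ s, α i • m i‖ ^ 2 / (2 * ∑ i ∈ s, α i * ρ i) ≤
      ∑ i ∈ s, α i * (‖m i‖ ^ 2 / (2 * ρ i)) := by
    calc ‖∑ i ∈ s, α i • m i‖ ^ 2 / (2 * ∑ i ∈ s, α i * ρ i)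
        = ‖∑ i ∈ s, α i • m i‖ ^ 2 / (∑ i ∈ s, α i * ρ i) / 2 := by ring
      _ ≤ (∑ i ∈ s, α i * (‖m i‖ ^ 2 / ρ i)) / 2 := by
        gcongr; exact norm_sum_smul_sq_div_sum_le s m hα hρ
      _ = ∑ i ∈ s, α i * (‖m i‖ ^ 2 / (2 * ρ i)) := by
        rw [sum_div]; exact sum_congr rfl fun i _ => by ring
  unfold eulerPressure
  calc ∑ i ∈ s, α i * ((γ - 1) * (E i - ‖m i‖ ^ 2 / (2 * ρ i)))
      = (γ - 1) * (∑ i ∈ s, α i * E i - ∑ i ∈ s, α i * (‖m i‖ ^ 2 / (2 * ρ i))) := by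
        rw [← sum_sub_distrib, mul_sum]; exact sum_congr rfl fun i _ => by ring
    _ ≤ _ := by gcongr

theorem le_log_sub_mul_log_of_exp_mul_rpow_le {s₀ γ ρ p : ℝ} (hρ : 0 < ρ)
    (h : exp s₀ * ρ ^ γ ≤ p) : s₀ ≤ log p - γ * log ρ := by
  have hlog := log_le_log (by positivity) h
  rw [log_mul (exp_ne_zero s₀) (by positivity), log_exp, log_rpow hρ] at hlog
  linarith

theorem entropy_quasi_concavity_general
    (γ : ℝ) (hγ : 1 < γ) (d K : ℕ) (s0 : ℝ)
    (ρ : Fin K → ℝ) (m : Fin K → EuclideanSpace ℝ (Fin d)) (E : Fin K → ℝ)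
    (hρ : ∀ k, 0 < ρ k)
    (hent : ∀ k, eulerPressure γ (ρ k) (m k) (E k) ≥ Real.exp s0 * ρ k ^ γ)
    (α : Fin K → ℝ) (hα : ∀ k, 0 ≤ α k) (hαsum : ∑ k, α k = 1) :
    0 < ∑ k, α k * ρ k ∧
    eulerPressure γ (∑ k, α k * ρ k) (∑ k, α k • m k) (∑ k, α k * E k) ≥
      Real.exp s0 * (∑ k, α k * ρ k) ^ γ ∧
    Real.log (eulerPressure γ (∑ k, α k * ρ k) (∑ k, α k • m k) (∑ k, α k * E k)) -
        γ * Real.log (∑ k, α k * ρ k) ≥ s0 := by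
  have hρmean : 0 < ∑ k, α k * ρ k := by
    simpa using (convex_Ioi (0 : ℝ)).sum_mem (fun k _ => hα k) hαsum fun k _ => hρ k
  have hpressure : exp s0 * (∑ k, α k * ρ k) ^ γ ≤
      eulerPressure γ (∑ k, α k * ρ k) (∑ k, α k • m k) (∑ k, α k * E k) :=
    calc exp s0 * (∑ k, α k * ρ k) ^ γ ≤ exp s0 * ∑ k, α k * ρ k ^ γ := by
          gcongr
          exact rpow_arith_mean_le_arith_mean_rpow univ α ρ (fun k _ => hα k) hαsum
            (fun k _ => (hρ k).le) hγ.le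
      _ = ∑ k, α k * (exp s0 * ρ k ^ γ) := by rw [mul_sum]; exact sum_congr rfl fun k _ => by ring
      _ ≤ ∑ k, α k * eulerPressure γ (ρ k) (m k) (E k) := by
          gcongr with k
          · exact hα k
          · exact hent k
      _ ≤ _ := sum_mul_eulerPressure_le hγ.le univ m E (fun k _ => hα k) fun k _ => hρ k
  exact ⟨hρmean, hpressure, le_log_sub_mul_log_of_exp_mul_rpow_le hρmean hpressure⟩

/-- quasi-concavity of the entropy: if every state
`U_k = (ρ_k, m_k, E_k)` with `ρ_k > 0` satisfies `p(U_k) ≥ exp(s⁰) ρ_k^γ`,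
then any convex combination `U = Σ α_k U_k` has positive density and satisfies
`p(U) ≥ exp(s⁰) ρ(U)^γ`, equivalently `s(U) = ln p(U) − γ ln ρ(U) ≥ s⁰`. -/
theorem entropy_quasi_concavity
    (γ : ℝ) (hγ : 1 < γ) (d K : ℕ) (hd : 1 ≤ d) (hK : 0 < K) (s0 : ℝ)
    (ρ : Fin K → ℝ) (m : Fin K → EuclideanSpace ℝ (Fin d)) (E : Fin K → ℝ)
    (hρ : ∀ k, 0 < ρ k)
    (hent : ∀ k, eulerPressure γ (ρ k) (m k) (E k) ≥ Real.exp s0 * ρ k ^ γ)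
    (α : Fin K → ℝ) (hα : ∀ k, 0 ≤ α k) (hαsum : ∑ k, α k = 1) :
    0 < ∑ k, α k * ρ k ∧
    eulerPressure γ (∑ k, α k * ρ k) (∑ k, α k • m k) (∑ k, α k * E k) ≥
      Real.exp s0 * (∑ k, α k * ρ k) ^ γ ∧
    Real.log (eulerPressure γ (∑ k, α k * ρ k) (∑ k, α k • m k) (∑ k, α k * E k)) -
        γ * Real.log (∑ k, α k * ρ k) ≥ s0 :=
  entropy_quasi_concavity_general γ hγ d K s0 ρ m E hρ hent α hα hαsum
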